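/- arXiv:2205.13972 — 10 statements merged into one kernel-verified Lean document; each statement's English description precedes it below -/
import Mathlib

section
/- Let G be a maximally oriented PDAG (i.e., a PDAG closed under Meek's rules R1–R4). If p is a chordless path from S to T in G, then p is of definite status: every internal vertex on p is either a collider or a definite non-collider. -/
variable {V : Type*}

/-- Two vertices are adjacent in a partially directed graph if they are joined
by a directed edge (either way) or an undirected edge (either way). -/
def Adj (dir undir : V → V → Prop) (a b : V) : Prop :=
  dir a b ∨ dir b a ∨ undir a b ∨ undir b a

/-- The directed part of the graph has no directed cycle. -/
def NoDirCycle (dir : V → V → Prop) : Prop :=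
  ¬ ∃ (n : ℕ) (c : ℕ → V), 0 < n ∧ (∀ i, i < n → dir (c i) (c (i + 1))) ∧ c n = c 0

/-- A PDAG: undirected edges are symmetric, edge types are exclusive,
no self-loops, and no directed cycle. -/
def IsPDAG (dir undir : V → V → Prop) : Prop :=
  (∀ a b, undir a b → undir b a) ∧
  (∀ a b, dir a b → ¬ undir a b ∧ ¬ dir b a) ∧
  (∀ a, ¬ dir a a ∧ ¬ undir a a) ∧
  NoDirCycle dir

/-- Closure under Meek's rule R1: if a → b, b − c and a, c are non-adjacent,
then the undirected edge b − c cannot remain. -/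
def ClosedR1 (dir undir : V → V → Prop) : Prop :=
  ∀ a b c, dir a b → undir b c → ¬ Adj dir undir a c → False

/-- Closure under Meek's rule R2: if a → b → c then a − c cannot remain undirected. -/
def ClosedR2 (dir undir : V → V → Prop) : Prop :=
  ∀ a b c, dir a b → dir b c → undir a c → False

/-- Closure under Meek's rule R3: if a − b, a − c, a − d, c → b, d → b and
c, d non-adjacent, then a − b cannot remain undirected. -/
def ClosedR3 (dir undir : V → V → Prop) : Prop :=
  ∀ a b c d, undir a b → undir a c → undir a d → dir c b → dir d b →
    ¬ Adj dir undir c d → False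

/-- Closure under Meek's rule R4: if a − b, a − d, d → c, c → b, a and c adjacent,
and b, d non-adjacent, then a − b cannot remain undirected. -/
def ClosedR4 (dir undir : V → V → Prop) : Prop :=
  ∀ a b c d, undir a b → undir a d → dir d c → dir c b → Adj dir undir a c →
    ¬ Adj dir undir b d → False

/-- An MPDAG: a PDAG closed under Meek's rules R1–R4. -/
def IsMPDAG (dir undir : V → V → Prop) : Prop :=
  IsPDAG dir undir ∧ ClosedR1 dir undir ∧ ClosedR2 dir undir ∧
    ClosedR3 dir undir ∧ ClosedR4 dir undir

/-- `p 0, …, p k` is a path from `S` to `T`: endpoints match, vertices are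
distinct, and consecutive vertices are adjacent. -/
def IsPathFrom (dir undir : V → V → Prop) (k : ℕ) (p : ℕ → V) (S T : V) : Prop :=
  p 0 = S ∧ p k = T ∧
  (∀ i j, i ≤ k → j ≤ k → p i = p j → i = j) ∧
  (∀ i, i < k → Adj dir undir (p i) (p (i + 1)))

/-- A path is b-possibly causal if there is no backward edge `p j → p i` (i < j)
between any two of its vertices. -/
def BPossCausal (dir : V → V → Prop) (k : ℕ) (p : ℕ → V) : Prop :=
  ∀ i j, i < j → j ≤ k → ¬ dir (p j) (p i)

/-- A path is chordless if no two non-consecutive vertices on it are adjacent. -/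
def Chordless (dir undir : V → V → Prop) (k : ℕ) (p : ℕ → V) : Prop :=
  ∀ i j, i + 2 ≤ j → j ≤ k → ¬ Adj dir undir (p i) (p j)

/-- A causal (fully directed) path: every edge is directed forward. -/
def CausalPath (dir : V → V → Prop) (k : ℕ) (p : ℕ → V) : Prop :=
  ∀ i, i < k → dir (p i) (p (i + 1))

/-- Internal vertex `p i` is a collider on the path: `p (i-1) → p i ← p (i+1)`. -/
def Collider (dir : V → V → Prop) (i : ℕ) (p : ℕ → V) : Prop :=
  dir (p (i - 1)) (p i) ∧ dir (p (i + 1)) (p i)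

/-- Internal vertex `p i` is a definite non-collider on the path. -/
def DefNonCollider (dir undir : V → V → Prop) (i : ℕ) (p : ℕ → V) : Prop :=
  dir (p i) (p (i - 1)) ∨ dir (p i) (p (i + 1)) ∨
  (undir (p (i - 1)) (p i) ∧ undir (p i) (p (i + 1)) ∧
    ¬ Adj dir undir (p (i - 1)) (p (i + 1)))

/-- A path is of definite status if every internal vertex is a collider or a
definite non-collider. -/
def DefiniteStatus (dir undir : V → V → Prop) (k : ℕ) (p : ℕ → V) : Prop :=
  ∀ i, 0 < i → i < k → Collider dir i p ∨ DefNonCollider dir undir i p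

/-- `dirD` is (the edge relation of) a DAG in the Markov equivalence class
represented by the MPDAG `(dir, undir)`: it keeps all directed edges, orients
all undirected edges, adds no other edges, is acyclic and creates no new
v-structure. -/
def IsExtension (dir undir dirD : V → V → Prop) : Prop :=
  (∀ a b, dir a b → dirD a b) ∧
  (∀ a b, undir a b → dirD a b ∨ dirD b a) ∧
  (∀ a b, dirD a b → dir a b ∨ undir a b ∨ undir b a) ∧
  NoDirCycle dirD ∧
  (∀ a b c, dirD a b → dirD c b → a ≠ c → ¬ Adj dir undir a c → dir a b ∧ dir c b)

/-- A fully directed path from `S` to `T` for an edge relation `dirD`. -/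
def DirPathFrom (dirD : V → V → Prop) (k : ℕ) (p : ℕ → V) (S T : V) : Prop :=
  p 0 = S ∧ p k = T ∧ ∀ i, i < k → dirD (p i) (p (i + 1))

/-- There is a (nontrivial) directed path from `S` to `T`. -/
def HasDirPath (dirD : V → V → Prop) (S T : V) : Prop :=
  ∃ k p, 0 < k ∧ DirPathFrom dirD k p S T

/-- `T` is a definite descendant of `S`: in every DAG of the equivalence class
there is a directed path from `S` to `T`. -/
def DefDescendant (dir undir : V → V → Prop) (S T : V) : Prop :=
  ∀ dirD, IsExtension dir undir dirD → HasDirPath dirD S T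

/-- The critical set of `S` with respect to `T`: all vertices adjacent to `S`
lying on at least one chordless b-possibly causal path from `S` to `T`. -/
def CriticalSet (dir undir : V → V → Prop) (S T : V) : Set V :=
  {w | Adj dir undir S w ∧ ∃ k p, IsPathFrom dir undir k p S T ∧
    BPossCausal dir k p ∧ Chordless dir undir k p ∧ ∃ i, i ≤ k ∧ p i = w}

/-- In a PDAG closed under Meek's rules R1–R4, every chordless
path is of definite status. -/
theorem stmt2 (dir undir : V → V → Prop)
    (hmpdag : IsMPDAG dir undir)
    (k : ℕ) (p : ℕ → V) (S T : V)
    (hpath : IsPathFrom dir undir k p S T)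
    (hchordless : Chordless dir undir k p) :
    DefiniteStatus dir undir k p := by
  obtain ⟨⟨hsym, _, _, _⟩, hR1, _, _, _⟩ := hmpdag
  intro i hi hik
  have h1 : Adj dir undir (p (i - 1)) (p i) := by
    have h := hpath.2.2.2 (i - 1) (by omega)
    rwa [Nat.sub_add_cancel hi] at h
  have h2 : Adj dir undir (p i) (p (i + 1)) := hpath.2.2.2 i hik
  have hna : ¬ Adj dir undir (p (i - 1)) (p (i + 1)) :=
    hchordless (i - 1) (i + 1) (by omega) (by omega)
  have hna' : ¬ Adj dir undir (p (i + 1)) (p (i - 1)) := by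
    intro h
    rcases h with h | h | h | h
    · exact hna (Or.inr (Or.inl h))
    · exact hna (Or.inl h)
    · exact hna (Or.inr (Or.inr (Or.inr h)))
    · exact hna (Or.inr (Or.inr (Or.inl h)))
  rcases h1 with ha | ha | ha | ha <;> rcases h2 with hb | hb | hb | hb <;>
    first
    | exact Or.inr (Or.inl ha)
    | exact Or.inr (Or.inr (Or.inl hb))
    | exact Or.inl ⟨ha, hb⟩
    | exact (hR1 _ _ _ ha hb hna).elim
    | exact (hR1 _ _ _ ha (hsym _ _ hb) hna).elim
    | exact (hR1 _ _ _ hb (hsym _ _ ha) hna').elim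
    | exact (hR1 _ _ _ hb ha hna').elim
    | exact Or.inr (Or.inr (Or.inr ⟨ha, hb, hna⟩))
    | exact Or.inr (Or.inr (Or.inr ⟨ha, hsym _ _ hb, hna⟩))
    | exact Or.inr (Or.inr (Or.inr ⟨hsym _ _ ha, hb, hna⟩))
    | exact Or.inr (Or.inr (Or.inr ⟨hsym _ _ ha, hsym _ _ hb, hna⟩))
end

section
/- Let G be an MPDAG and D be any DAG in the Markov equivalence class represented by G (so every directed edge of G is directed the same way in D, and every undirected edge of G is directed some way in D). If p is a b-possibly causal path of definite status in G from V_0 to V_k, and for some index i the edge V_i → V_{i+1} is directed in G, then the subpath p(V_i, V_k) consists entirely of directed edges V_j → V_{j+1} in G for all j ≥ i. -/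
variable {V : Type*}

/-- On a b-possibly causal definite status path in an MPDAG, once
an edge `V_i → V_{i+1}` is directed, the rest of the path is directed. -/
theorem stmt4 (dir undir dirD : V → V → Prop)
    (hmpdag : IsMPDAG dir undir)
    (hext : IsExtension dir undir dirD)
    (k : ℕ) (p : ℕ → V)
    (hpath : IsPathFrom dir undir k p (p 0) (p k))
    (hbpc : BPossCausal dir k p)
    (hds : DefiniteStatus dir undir k p)
    (i : ℕ) (hik : i < k) (hdir : dir (p i) (p (i + 1))) :
    ∀ j, i ≤ j → j < k → dir (p j) (p (j + 1)) := by
  intro j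
  induction j with
  | zero =>
    intro hij _
    have : i = 0 := Nat.le_zero.mp hij
    subst this
    exact hdir
  | succ n ih =>
    intro hij hjk
    rcases Nat.lt_or_ge i (n + 1) with h | h
    · have hn : dir (p n) (p (n + 1)) := ih (Nat.lt_succ_iff.mp h) (by omega)
      rcases hds (n + 1) (by omega) (by omega) with hcol | hnc
      · exact absurd hcol.2 (hbpc (n + 1) (n + 1 + 1) (by omega) (by omega))
      · rcases hnc with hback | hfwd | hund
        · simp only [Nat.add_sub_cancel] at hback
          exact absurd hback (hbpc n (n + 1) (by omega) (by omega))
        · exact hfwd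
        · simp only [Nat.add_sub_cancel] at hund
          exact absurd hund.1 ((hmpdag.1.2.1 _ _ hn).1)
    · have : i = n + 1 := by omega
      subst this
      exact hdir
end

section
/- Let G be an MPDAG and S, T two distinct vertices. If every b-possibly causal path from S to T of the form p has a subsequence forming a b-possibly causal unshielded (chordless) path from S to T, and S has no parents or siblings in G (S is a root: every edge at S is oriented out of S), then every possible descendant of S is a definite descendant of S, i.e., for every vertex T with a b-possibly causal path from S to T in G, there exists a fully directed causal path from S to T in G. -/
variable {V : Type*}

/-- If in an MPDAG every b-possibly causal path from root `S` has
a chordless b-possibly causal subsequence, and `S` has no parents or siblings,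
then every possible descendant of `S` is reached by a fully directed causal
path from `S` in `G`. -/
theorem stmt5 (dir undir : V → V → Prop)
    (hmpdag : IsMPDAG dir undir) (S : V)
    (hroot : ∀ b, ¬ dir b S ∧ ¬ undir S b ∧ ¬ undir b S)
    (hsub : ∀ (T : V) (k : ℕ) (p : ℕ → V),
        IsPathFrom dir undir k p S T → BPossCausal dir k p →
        ∃ m q, IsPathFrom dir undir m q S T ∧ BPossCausal dir m q ∧
          Chordless dir undir m q) :
    ∀ (T : V) (k : ℕ) (p : ℕ → V),
      IsPathFrom dir undir k p S T → BPossCausal dir k p →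
      ∃ m q, IsPathFrom dir undir m q S T ∧ CausalPath dir m q := by
  intro T k p hpath hbp
  obtain ⟨m, q, hq, hqb, hqc⟩ := hsub T k p hpath hbp
  refine ⟨m, q, hq, ?_⟩
  obtain ⟨hq0, hqm, hinj, hadj⟩ := hq
  obtain ⟨⟨hsym, _, _, _⟩, hr1, _, _, _⟩ := hmpdag
  -- prove every edge directed forward, by strong statement on i
  intro i
  induction i with
  | zero =>
    intro h0
    have hA := hadj 0 h0
    rw [hq0] at hA
    rcases hA with h | h | h | h
    · rw [hq0]; exact h
    · exact absurd h (hroot (q 1)).1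
    · exact absurd h (hroot (q 1)).2.1
    · exact absurd h (hroot (q 1)).2.2
  | succ n ih =>
    intro hlt
    have hn : n < m := Nat.lt_of_succ_lt hlt
    have hdn : dir (q n) (q (n + 1)) := ih hn
    have hA := hadj (n + 1) hlt
    rcases hA with h | h | h | h
    · exact h
    · exact absurd h (hqb (n + 1) (n + 2) (by omega) (by omega))
    · exact absurd (hr1 (q n) (q (n + 1)) (q (n + 2)) hdn h
        (hqc n (n + 2) (by omega) (by omega))) id
    · exact absurd (hr1 (q n) (q (n + 1)) (q (n + 2)) hdn (hsym _ _ h)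
        (hqc n (n + 2) (by omega) (by omega))) id
end

section
/- Let G be an MPDAG, S and T distinct vertices, and C the critical set of S with respect to T (the set of vertices adjacent to S lying on at least one chordless b-possibly causal path from S to T). Then T is a definite descendant of S (i.e., in every DAG D in the Markov equivalence class of G there is a directed path from S to T) if and only if in every such DAG D, C contains a child of S. -/
variable {V : Type*}

/-- Auxiliary: a backward edge over a directed chain yields a directed cycle. -/
lemma cycle_of_back {dirD : V → V → Prop} (hnc : NoDirCycle dirD) {k : ℕ} {q : ℕ → V}
    (hq : ∀ m, m < k → dirD (q m) (q (m + 1))) {i j : ℕ} (hij : i < j) (hjk : j ≤ k)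
    (hback : dirD (q j) (q i)) : False := by
  apply hnc
  refine ⟨j - i + 1, fun m => if i + m ≤ j then q (i + m) else q i, by omega, ?_, ?_⟩
  · intro m hm
    by_cases h1 : i + m + 1 ≤ j
    · simp only [if_pos (by omega : i + m ≤ j), if_pos (show i + (m + 1) ≤ j by omega)]
      have : i + (m + 1) = i + m + 1 := by omega
      rw [this]
      exact hq (i + m) (by omega)
    · have hij' : i + m = j := by omega
      simp only [if_pos (by omega : i + m ≤ j), if_neg (show ¬ i + (m + 1) ≤ j by omega)]
      rw [hij']
      exact hback
  · simp only [if_neg (show ¬ i + (j - i + 1) ≤ j by omega), if_pos (show i + 0 ≤ j by omega)]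
    rfl

/-- Auxiliary: a repeated vertex on a directed chain yields a directed cycle. -/
lemma cycle_of_repeat {dirD : V → V → Prop} (hnc : NoDirCycle dirD) {k : ℕ} {q : ℕ → V}
    (hq : ∀ m, m < k → dirD (q m) (q (m + 1))) {i j : ℕ} (hij : i < j) (hjk : j ≤ k)
    (heq : q i = q j) : False := by
  apply hnc
  refine ⟨j - i, fun m => q (i + m), by omega, ?_, ?_⟩
  · intro m hm
    show dirD (q (i + m)) (q (i + (m + 1)))
    have : i + (m + 1) = i + m + 1 := by omega
    rw [this]
    exact hq (i + m) (by omega)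
  · show q (i + (j - i)) = q (i + 0)
    have : i + (j - i) = j := by omega
    rw [this, ← heq]
    rfl

/-- `T` is a definite descendant of `S` iff in every DAG of the
equivalence class the critical set of `S` w.r.t. `T` contains a child of `S`. -/
theorem stmt6 (dir undir : V → V → Prop)
    (hmpdag : IsMPDAG dir undir)
    (S T : V) (hST : S ≠ T) :
    DefDescendant dir undir S T ↔
      ∀ dirD, IsExtension dir undir dirD →
        ∃ w ∈ CriticalSet dir undir S T, dirD S w := by
  obtain ⟨⟨hsym, hexcl, hloop, hnc⟩, _, _, _, _⟩ := hmpdag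
  constructor
  · -- forward direction
    intro hdd dirD hext
    obtain ⟨hkeep, horient, hsub, hncD, hvstr⟩ := hext
    have hD2G : ∀ a b, dirD a b → Adj dir undir a b := by
      intro a b h
      rcases hsub a b h with h | h | h
      · exact Or.inl h
      · exact Or.inr (Or.inr (Or.inl h))
      · exact Or.inr (Or.inr (Or.inr h))
    classical
    have hex : ∃ n, 0 < n ∧ ∃ p, DirPathFrom dirD n p S T := by
      obtain ⟨k, p, hk, hp⟩ := hdd dirD ⟨hkeep, horient, hsub, hncD, hvstr⟩
      exact ⟨k, hk, p, hp⟩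
    obtain ⟨hn, p, hp0, hpn, hchain⟩ := Nat.find_spec hex
    set n := Nat.find hex with hndef
    have hmin : ∀ m, m < n → ¬ (0 < m ∧ ∃ q, DirPathFrom dirD m q S T) :=
      fun m hm => Nat.find_min hex hm
    have hinj : ∀ i j, i ≤ n → j ≤ n → p i = p j → i = j := by
      intro i j hi hj heq
      by_contra hne
      rcases Nat.lt_or_ge i j with h | h
      · exact cycle_of_repeat hncD hchain h hj heq
      · exact cycle_of_repeat hncD hchain (by omega : j < i) hi heq.symm
    have hbpc : BPossCausal dir n p := by
      intro i j hij hj hd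
      exact cycle_of_back hncD hchain hij hj (hkeep _ _ hd)
    have hchord : Chordless dir undir n p := by
      intro i j hij hj hadj
      have hDor : dirD (p i) (p j) ∨ dirD (p j) (p i) := by
        rcases hadj with h | h | h | h
        · exact Or.inl (hkeep _ _ h)
        · exact Or.inr (hkeep _ _ h)
        · exact horient _ _ h
        · exact (horient _ _ h).symm
      rcases hDor with h | h
      · -- shortcut gives a shorter directed path, contradicting minimality
        apply hmin (n - (j - i - 1)) (by omega)
        refine ⟨by omega, fun m => if m ≤ i then p m else p (m + (j - i - 1)), ?_, ?_, ?_⟩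
        · simp only [if_pos (Nat.zero_le i)]
          exact hp0
        · simp only [if_neg (show ¬ n - (j - i - 1) ≤ i by omega)]
          have : n - (j - i - 1) + (j - i - 1) = n := by omega
          rw [this]
          exact hpn
        · intro m hm
          by_cases h1 : m + 1 ≤ i
          · simp only [if_pos (by omega : m ≤ i), if_pos h1]
            exact hchain m (by omega)
          · by_cases h2 : m ≤ i
            · have hmi : m = i := by omega
              simp only [if_pos h2, if_neg h1]
              have : m + 1 + (j - i - 1) = j := by omega
              rw [this, hmi]
              exact h
            · simp only [if_neg h2, if_neg h1]
              have : m + 1 + (j - i - 1) = m + (j - i - 1) + 1 := by omega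
              rw [this]
              exact hchain (m + (j - i - 1)) (by omega)
      · exact cycle_of_back hncD hchain (by omega : i < j) hj h
    have hS1 : dirD S (p 1) := by
      have := hchain 0 hn
      rwa [hp0] at this
    refine ⟨p 1, ⟨hD2G S (p 1) hS1, n, p, ⟨hp0, hpn, hinj, fun i hi => hD2G _ _ (hchain i hi)⟩,
      hbpc, hchord, 1, by omega, rfl⟩, hS1⟩
  · -- backward direction
    intro hC dirD hext
    obtain ⟨w, ⟨hadjSw, k, p, ⟨hp0, hpk, hinj, hadj⟩, hbpc, hchord, i, hik, hpi⟩, hSw⟩ :=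
      hC dirD hext
    obtain ⟨hkeep, horient, hsub, hncD, hvstr⟩ := hext
    have hwS : w ≠ S := by
      intro h
      subst h
      rcases hadjSw with h | h | h | h
      · exact (hloop w).1 h
      · exact (hloop w).1 h
      · exact (hloop w).2 h
      · exact (hloop w).2 h
    have hi1 : i = 1 := by
      have hi0 : i ≠ 0 := by
        intro h
        exact hwS (by rw [← hpi, h, hp0])
      by_contra hne
      have h2 : 0 + 2 ≤ i := by omega
      have := hchord 0 i h2 hik
      rw [hp0, hpi] at this
      exact this hadjSw
    subst hi1
    have hk1 : 0 < k := by omega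
    have hSp1 : dirD (p 0) (p 1) := by rw [hp0, hpi]; exact hSw
    have hall : ∀ m, m < k → dirD (p m) (p (m + 1)) := by
      intro m
      induction m with
      | zero => intro _; exact hSp1
      | succ m ih =>
        intro hm
        have hprev := ih (by omega)
        have hadjm : Adj dir undir (p (m + 1)) (p (m + 1 + 1)) := hadj (m + 1) hm
        have hDor : dirD (p (m + 1)) (p (m + 2)) ∨ dirD (p (m + 2)) (p (m + 1)) := by
          rcases hadjm with h | h | h | h
          · exact Or.inl (hkeep _ _ h)
          · exact absurd h (hbpc (m + 1) (m + 2) (by omega) (by omega))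
          · exact horient _ _ h
          · exact (horient _ _ h).symm
        rcases hDor with h | h
        · exact h
        · exfalso
          have hne : p m ≠ p (m + 2) := by
            intro he
            have := hinj m (m + 2) (by omega) (by omega) he
            omega
          have hnadj : ¬ Adj dir undir (p m) (p (m + 2)) :=
            hchord m (m + 2) (by omega) (by omega)
          have hv := (hvstr _ _ _ hprev h hne hnadj).2
          exact hbpc (m + 1) (m + 2) (by omega) (by omega) hv
    exact ⟨k, p, hk1, hp0, hpk, hall⟩
end

section
/- Let G be an MPDAG, X a vertex, and R a subset of the siblings of X (vertices joined to X by undirected edges). Suppose R induces a complete subgraph of G, and there exist R₀ ∈ R and W adjacent to X with W ∉ R ∪ pa(X, G) such that W → R₀ is in G. Then W is a sibling of X and R ∪ {W} induces a complete subgraph of G. -/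
variable {V : Type*}

/-- If `R ⊆ sib(X)` induces a complete subgraph and some
`W ∈ adj(X) \ (R ∪ pa(X))` has `W → R₀` for some `R₀ ∈ R`, then `W` is a
sibling of `X` and `R ∪ {W}` induces a complete subgraph. -/
theorem stmt7 (dir undir : V → V → Prop)
    (hmpdag : IsMPDAG dir undir)
    (X : V) (R : Set V)
    (hRsib : ∀ r ∈ R, undir X r)
    (hRcomp : ∀ a ∈ R, ∀ b ∈ R, a ≠ b → Adj dir undir a b)
    (R₀ W : V) (hR₀ : R₀ ∈ R)
    (hWadj : Adj dir undir X W) (hWnotR : W ∉ R) (hWnotpa : ¬ dir W X)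
    (hWR₀ : dir W R₀) :
    undir X W ∧
      ∀ a ∈ R ∪ {W}, ∀ b ∈ R ∪ {W}, a ≠ b → Adj dir undir a b := by
  obtain ⟨⟨hsym, hexcl, hirr, _⟩, hr1, hr2, hr3, hr4⟩ := hmpdag
  have adjsym : ∀ a b : V, Adj dir undir a b → Adj dir undir b a := by
    intro a b h
    rcases h with h | h | h | h
    · exact Or.inr (Or.inl h)
    · exact Or.inl h
    · exact Or.inr (Or.inr (Or.inr h))
    · exact Or.inr (Or.inr (Or.inl h))
  have hXR₀ : undir X R₀ := hRsib R₀ hR₀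
  -- W is a sibling of X
  have hXW : undir X W := by
    rcases hWadj with h | h | h | h
    · exact absurd (hr2 X W R₀ h hWR₀ hXR₀) not_false
    · exact absurd h hWnotpa
    · exact h
    · exact hsym W X h
  refine ⟨hXW, ?_⟩
  -- key: W adjacent to every r ∈ R
  have key : ∀ r ∈ R, Adj dir undir W r := by
    intro r hr
    by_contra hnadj
    have hrR₀ : r ≠ R₀ := by
      rintro rfl
      exact hnadj (Or.inl hWR₀)
    have hXr : undir X r := hRsib r hr
    rcases hRcomp r hr R₀ hR₀ hrR₀ with h | h | h | h
    · -- r → R₀ : rule R3 with a = X, b = R₀, c = W, d = r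
      exact hr3 X R₀ W r hXR₀ hXW hXr hWR₀ h
        (fun hc => hnadj hc)
    · -- R₀ → r : rule R4 with a = X, b = r, c = R₀, d = W
      exact hr4 X r R₀ W hXr hXW hWR₀ h
        (Or.inr (Or.inr (Or.inl hXR₀)))
        (fun hc => hnadj (adjsym r W hc))
    · -- r − R₀ : rule R1 with a = W, b = R₀, c = r
      exact hr1 W R₀ r hWR₀ (hsym r R₀ h) hnadj
    · -- R₀ − r : rule R1
      exact hr1 W R₀ r hWR₀ h hnadj
  intro a ha b hb hab
  rcases ha with ha | ha
  · rcases hb with hb | hb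
    · exact hRcomp a ha b hb hab
    · rcases hb with rfl
      exact adjsym b a (key a ha)
  · rcases ha with rfl
    rcases hb with hb | hb
    · exact key b hb
    · rcases hb with rfl
      exact absurd rfl hab
end

section
/- Let G be an MPDAG and X a vertex. There exists a subset H of sib(X, G) that induces a complete subgraph of G if and only if there exists R with H ⊆ R ⊆ sib(X, G) such that: R induces a complete subgraph of G, and there do not exist R₀ ∈ R and W ∈ adj(X,G) \ (R ∪ pa(X,G)) with W → R₀ in G. -/
variable {V : Type*}

lemma adj_symm {dir undir : V → V → Prop} {a b : V} (h : Adj dir undir a b) :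
    Adj dir undir b a := by
  rcases h with h | h | h | h
  · exact Or.inr (Or.inl h)
  · exact Or.inl h
  · exact Or.inr (Or.inr (Or.inr h))
  · exact Or.inr (Or.inr (Or.inl h))

/-- Auxiliary fact: if `R ⊆ sib(X)` is complete and `W ∈ adj(X) \ (R ∪ pa(X))`
has `W → R₀` for some `R₀ ∈ R`, then `W ∈ sib(X)` and `R ∪ {W}` is complete. -/
lemma aux_extend (dir undir : V → V → Prop) (hmpdag : IsMPDAG dir undir)
    (X : V) (R : Set V) (hRsib : ∀ r ∈ R, undir X r)
    (hRcomp : ∀ a ∈ R, ∀ b ∈ R, a ≠ b → Adj dir undir a b)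
    (R₀ W : V) (hR₀ : R₀ ∈ R) (hWadj : Adj dir undir X W) (_hWR : W ∉ R)
    (hWpa : ¬ dir W X) (hWR₀ : dir W R₀) :
    undir X W ∧ ∀ r ∈ R, Adj dir undir W r := by
  obtain ⟨⟨hsym, hexcl, hirr, hacyc⟩, hR1, hR2, hR3, hR4⟩ := hmpdag
  have hXR₀ : undir X R₀ := hRsib R₀ hR₀
  -- X → W is impossible by R2
  have hXW : ¬ dir X W := fun h => hR2 X W R₀ h hWR₀ hXR₀
  have hXWu : undir X W := by
    rcases hWadj with h | h | h | h
    · exact absurd h hXW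
    · exact absurd h hWpa
    · exact h
    · exact hsym _ _ h
  refine ⟨hXWu, fun r hr => ?_⟩
  by_cases hrR₀ : r = R₀
  · exact Or.inl (hrR₀ ▸ hWR₀)
  have hXr : undir X r := hRsib r hr
  have hAdjrR₀ : Adj dir undir r R₀ := hRcomp r hr R₀ hR₀ hrR₀
  by_contra hna
  have hnarev : ¬ Adj dir undir r W := fun h => hna (adj_symm h)
  rcases hAdjrR₀ with h | h | h | h
  · -- r → R₀ : use R3 with a = X, b = R₀, c = W, d = r
    exact hR3 X R₀ W r hXR₀ hXWu hXr hWR₀ h hna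
  · -- R₀ → r : use R4 with a = X, b = r, c = R₀, d = W
    exact hR4 X r R₀ W hXr hXWu hWR₀ h (Or.inr (Or.inr (Or.inl hXR₀))) hnarev
  · -- r − R₀ : use R1 with a = W, b = R₀, c = r
    exact hR1 W R₀ r hWR₀ (hsym _ _ h) hna
  · exact hR1 W R₀ r hWR₀ h hna

/-- A subset `H` of `sib(X)` induces a complete subgraph iff there
is `R` with `H ⊆ R ⊆ sib(X)` inducing a complete subgraph such that no
`W ∈ adj(X) \ (R ∪ pa(X))` has a directed edge into `R`. -/
theorem stmt8 (dir undir : V → V → Prop)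
    (hmpdag : IsMPDAG dir undir)
    (X : V) (H : Set V) (hHsib : ∀ h ∈ H, undir X h) :
    (∀ a ∈ H, ∀ b ∈ H, a ≠ b → Adj dir undir a b) ↔
      ∃ R : Set V, H ⊆ R ∧ (∀ r ∈ R, undir X r) ∧
        (∀ a ∈ R, ∀ b ∈ R, a ≠ b → Adj dir undir a b) ∧
        ¬ ∃ R₀ W, R₀ ∈ R ∧ Adj dir undir X W ∧ W ∉ R ∧ ¬ dir W X ∧
          dir W R₀ := by
  constructor
  · intro hHcomp
    -- Zorn's lemma: take a maximal complete subset of sib(X) containing H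
    set S : Set (Set V) := {R | H ⊆ R ∧ (∀ r ∈ R, undir X r) ∧
      (∀ a ∈ R, ∀ b ∈ R, a ≠ b → Adj dir undir a b)} with hS
    have hHS : H ∈ S := ⟨subset_rfl, hHsib, hHcomp⟩
    obtain ⟨R, hHR, hRS, hRmax⟩ := zorn_subset_nonempty S (fun c hcS hchain hcne => by
      refine ⟨⋃₀ c, ⟨?_, ?_, ?_⟩, fun s hs => Set.subset_sUnion_of_mem hs⟩
      · obtain ⟨s, hs⟩ := hcne
        exact (hcS hs).1.trans (Set.subset_sUnion_of_mem hs)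
      · rintro r ⟨s, hs, hrs⟩
        exact (hcS hs).2.1 r hrs
      · rintro a ⟨s, hs, has⟩ b ⟨t, ht, hbt⟩ hab
        rcases hchain.total hs ht with h | h
        · exact (hcS ht).2.2 a (h has) b hbt hab
        · exact (hcS hs).2.2 a has b (h hbt) hab) H hHS
    obtain ⟨hHR', hRsib, hRcomp⟩ := hRS
    refine ⟨R, hHR', hRsib, hRcomp, ?_⟩
    rintro ⟨R₀, W, hR₀, hWadj, hWR, hWpa, hWR₀⟩
    obtain ⟨hXWu, hWadjR⟩ := aux_extend dir undir hmpdag X R hRsib hRcomp R₀ W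
      hR₀ hWadj hWR hWpa hWR₀
    have hmem : insert W R ∈ S := by
      refine ⟨hHR'.trans (Set.subset_insert _ _), ?_, ?_⟩
      · rintro r (rfl | hr)
        · exact hXWu
        · exact hRsib r hr
      · rintro a (rfl | ha) b (rfl | hb) hab
        · exact absurd rfl hab
        · exact hWadjR b hb
        · exact adj_symm (hWadjR a ha)
        · exact hRcomp a ha b hb hab
    exact hWR (hRmax hmem (Set.subset_insert _ _) (Set.mem_insert _ _))
  · rintro ⟨R, hHR, _, hRcomp, _⟩ a ha b hb hab
    exact hRcomp a (hHR ha) b (hHR hb) hab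
end

section
/- Let G be an MPDAG, S, T distinct vertices, and C the critical set of S with respect to T. Then there exists a DAG D in the equivalence class [G] with C ∩ ch(S, D) = ∅ if and only if C = ∅, or C induces a complete subgraph of G and C ∩ ch(S, G) = ∅. -/
variable {V : Type*}

/-- Any member of the critical set is adjacent to `S` and has no edge into `S`. -/
lemma critical_props {dir undir : V → V → Prop} (hmpdag : IsMPDAG dir undir)
    {S T w : V} (hw : w ∈ CriticalSet dir undir S T) :
    Adj dir undir S w ∧ ¬ dir w S := by
  obtain ⟨hadj, k, p, ⟨h0, hk, hinj, hstep⟩, hbpc, hchord, i, hik, hpi⟩ := hw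
  refine ⟨hadj, ?_⟩
  have hi0 : i ≠ 0 := by
    intro h; subst h
    rw [hpi] at h0; subst h0
    rcases hadj with h | h | h | h
    · exact (hmpdag.1.2.2.1 w).1 h
    · exact (hmpdag.1.2.2.1 w).1 h
    · exact (hmpdag.1.2.2.1 w).2 h
    · exact (hmpdag.1.2.2.1 w).2 h
  have hi1 : i = 1 := by
    by_contra hne
    have h2i : 0 + 2 ≤ i := by omega
    have := hchord 0 i h2i hik
    rw [h0, hpi] at this
    exact this hadj
  subst hi1
  have := hbpc 0 1 (by omega) hik
  rw [h0, hpi] at this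
  exact this

/-- Key step lemma using Meek rules R1, R3, R4: if `a → a'`, `a'` is adjacent to
`b`, and `a, a', b` are all undirected-neighbours of `S`, then `a` and `b` are
adjacent. -/
lemma step_adj {dir undir : V → V → Prop} (hmpdag : IsMPDAG dir undir)
    {S a a' b : V} (hSa : undir S a) (hSa' : undir S a') (hSb : undir S b)
    (haa' : dir a a') (hadj : Adj dir undir a' b) : Adj dir undir a b := by
  by_contra hn
  rcases hadj with h | h | h | h
  · -- a → a' → b : Meek rule R4 with (S, b, a', a)
    exact hmpdag.2.2.2.2 S b a' a hSb hSa haa' h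
      (Or.inr (Or.inr (Or.inl hSa'))) (fun hc => hn (adj_symm hc))
  · -- a → a' ← b : Meek rule R3 with (S, a', a, b)
    exact hmpdag.2.2.2.1 S a' a b hSa' hSa hSb haa' h hn
  · -- a → a' − b : Meek rule R1
    exact hmpdag.2.1 a a' b haa' h hn
  · exact hmpdag.2.1 a a' b haa' (hmpdag.1.1 b a' h) hn

/-- Two starting points of directed chains (inside the neighbourhood of `S`)
ending in a complete set `C` are adjacent. -/
lemma chains_adj {dir undir : V → V → Prop} (hmpdag : IsMPDAG dir undir)
    (S : V) (C : Set V)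
    (hcomp : ∀ a ∈ C, ∀ b ∈ C, a ≠ b → Adj dir undir a b) :
    ∀ N m n (qa qb : ℕ → V), m + n = N →
      qa m ∈ C → (∀ i < m, dir (qa i) (qa (i + 1))) → (∀ i ≤ m, undir S (qa i)) →
      qb n ∈ C → (∀ i < n, dir (qb i) (qb (i + 1))) → (∀ i ≤ n, undir S (qb i)) →
      qa 0 ≠ qb 0 → Adj dir undir (qa 0) (qb 0) := by
  intro N
  induction N using Nat.strong_induction_on with
  | _ N IH =>
    intro m n qa qb hmn hqaC hqad hqau hqbC hqbd hqbu hne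
    match m, hmn with
    | 0, hmn =>
      match n, hmn with
      | 0, hmn => exact hcomp _ hqaC _ hqbC hne
      | (n' + 1), hmn =>
        have hdb : dir (qb 0) (qb 1) := hqbd 0 (by omega)
        by_cases hb : qb 1 = qa 0
        · rw [hb] at hdb; exact Or.inr (Or.inl hdb)
        · have hadj' : Adj dir undir (qb 1) (qa 0) := by
            have := IH n' (by omega) n' 0 (fun i => qb (i + 1)) qa (by omega)
              hqbC (fun i hi => hqbd (i + 1) (by omega))
              (fun i hi => hqbu (i + 1) (by omega))
              hqaC (fun i hi => by omega) (fun i hi => by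
                have : i = 0 := by omega
                subst this; exact hqau 0 (by omega)) hb
            exact this
          exact adj_symm (step_adj hmpdag (hqbu 0 (by omega)) (hqbu 1 (by omega))
            (hqau 0 (by omega)) hdb hadj')
    | (m' + 1), hmn =>
      have hda : dir (qa 0) (qa 1) := hqad 0 (by omega)
      by_cases ha : qa 1 = qb 0
      · rw [ha] at hda; exact Or.inl hda
      · have hadj' : Adj dir undir (qa 1) (qb 0) := by
          have := IH (m' + n) (by omega) m' n (fun i => qa (i + 1)) qb rfl
            hqaC (fun i hi => hqad (i + 1) (by omega))
            (fun i hi => hqau (i + 1) (by omega)) hqbC hqbd hqbu ha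
          exact this
        exact step_adj hmpdag (hqau 0 (by omega)) (hqau 1 (by omega))
          (hqbu 0 (by omega)) hda hadj'

/-- There is a DAG `D ∈ [G]` with `C ∩ ch(S,D) = ∅` iff `C = ∅`,
or `C` induces a complete subgraph of `G` and `C ∩ ch(S,G) = ∅`. -/
theorem stmt9 (dir undir : V → V → Prop)
    (hmpdag : IsMPDAG dir undir)
    (S T : V) (hST : S ≠ T)
    (hFang : ∀ R : Set V, (∀ r ∈ R, undir S r) →
      ((∃ dirD, IsExtension dir undir dirD ∧
          R = {w | undir S w ∧ dirD w S}) ↔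
        ((∀ a ∈ R, ∀ b ∈ R, a ≠ b → Adj dir undir a b) ∧
         ¬ ∃ R₀ W, R₀ ∈ R ∧ Adj dir undir S W ∧ W ∉ R ∧ ¬ dir W S ∧
           dir W R₀))) :
    (∃ dirD, IsExtension dir undir dirD ∧
        ∀ w ∈ CriticalSet dir undir S T, ¬ dirD S w) ↔
      (CriticalSet dir undir S T = ∅ ∨
        ((∀ a ∈ CriticalSet dir undir S T, ∀ b ∈ CriticalSet dir undir S T,
            a ≠ b → Adj dir undir a b) ∧
          ∀ w ∈ CriticalSet dir undir S T, ¬ dir S w)) := by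
  set C := CriticalSet dir undir S T with hCdef
  constructor
  · rintro ⟨D, hD, h⟩
    right
    have hch : ∀ w ∈ C, ¬ dir S w := by
      intro w hw hdSw
      exact h w hw (hD.1 S w hdSw)
    have hund : ∀ w ∈ C, undir S w := by
      intro w hw
      obtain ⟨hadj, hnws⟩ := critical_props hmpdag hw
      rcases hadj with hx | hx | hx | hx
      · exact absurd hx (hch w hw)
      · exact absurd hx hnws
      · exact hx
      · exact hmpdag.1.1 w S hx
    have hpar : ∀ w ∈ C, D w S := by
      intro w hw
      rcases hD.2.1 S w (hund w hw) with hx | hx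
      · exact absurd hx (h w hw)
      · exact hx
    refine ⟨?_, hch⟩
    intro a ha b hb hab
    by_contra hn
    have := hD.2.2.2.2 a S b (hpar a ha) (hpar b hb) hab hn
    exact critical_props hmpdag ha |>.2 (this.1)
  · intro hrhs
    have hcomp : ∀ a ∈ C, ∀ b ∈ C, a ≠ b → Adj dir undir a b := by
      rcases hrhs with he | ⟨h1, _⟩
      · intro a ha; rw [he] at ha; exact absurd ha (Set.notMem_empty a)
      · exact h1
    have hch : ∀ w ∈ C, ¬ dir S w := by
      rcases hrhs with he | ⟨_, h2⟩
      · intro w hw; rw [he] at hw; exact absurd hw (Set.notMem_empty w)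
      · exact h2
    have hund : ∀ w ∈ C, undir S w := by
      intro w hw
      obtain ⟨hadj, hnws⟩ := critical_props hmpdag hw
      rcases hadj with hx | hx | hx | hx
      · exact absurd hx (hch w hw)
      · exact absurd hx hnws
      · exact hx
      · exact hmpdag.1.1 w S hx
    -- the set of siblings of S with a directed chain (inside sib(S)) to C
    set R : Set V := {w | ∃ n : ℕ, ∃ q : ℕ → V, q 0 = w ∧ q n ∈ C ∧
      (∀ i < n, dir (q i) (q (i + 1))) ∧ (∀ i ≤ n, undir S (q i))} with hRdef
    have hCR : ∀ w ∈ C, w ∈ R := by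
      intro w hw
      exact ⟨0, fun _ => w, rfl, hw, fun i hi => absurd hi (by omega),
        fun i _ => hund w hw⟩
    have hsibs : ∀ r ∈ R, undir S r := by
      rintro r ⟨n, q, hq0, _, _, hu⟩
      rw [← hq0]; exact hu 0 (by omega)
    have hout := (hFang R hsibs).mpr ?_
    · obtain ⟨D, hD, hReq⟩ := hout
      refine ⟨D, hD, ?_⟩
      intro w hw hDSw
      have hwR : w ∈ R := hCR w hw
      rw [hReq] at hwR
      have hDwS : D w S := hwR.2
      -- 2-cycle contradiction
      exact hD.2.2.2.1 ⟨2, fun i => if i = 1 then w else S, by omega,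
        by intro i hi; interval_cases i <;> simpa, by simp⟩
    · constructor
      · rintro a ⟨m, qa, hqa0, hqaC, hqad, hqau⟩ b ⟨n, qb, hqb0, hqbC, hqbd, hqbu⟩ hab
        rw [← hqa0, ← hqb0]
        exact chains_adj hmpdag S C hcomp (m + n) m n qa qb rfl hqaC hqad hqau
          hqbC hqbd hqbu (by rw [hqa0, hqb0]; exact hab)
      · rintro ⟨R₀, W, hR₀, hadjSW, hWR, hWS, hWR₀⟩
        obtain ⟨n, q, hq0, hqC, hqd, hqu⟩ := hR₀
        have hSR₀ : undir S R₀ := by rw [← hq0]; exact hqu 0 (by omega)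
        have hSW : undir S W := by
          rcases hadjSW with hx | hx | hx | hx
          · exact absurd (hmpdag.2.2.1 S W R₀ hx (hq0 ▸ hWR₀) hSR₀) not_false
          · exact absurd hx hWS
          · exact hx
          · exact hmpdag.1.1 W S hx
        refine hWR ⟨n + 1, fun i => if i = 0 then W else q (i - 1), by simp, ?_, ?_, ?_⟩
        · simpa using hqC
        · intro i hi
          rcases Nat.eq_zero_or_pos i with h0 | hpos
          · subst h0; simpa [hq0] using hWR₀
          · have h1 : i ≠ 0 := by omega
            have h2 : i + 1 ≠ 0 := by omega
            simp only [h1, h2, if_false]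
            have : i - 1 + 1 = i + 1 - 1 := by omega
            rw [this] at *
            exact (by
              have := hqd (i - 1) (by omega)
              have he : i - 1 + 1 = i + 1 - 1 := by omega
              rwa [he] at this)
        · intro i hi
          rcases Nat.eq_zero_or_pos i with h0 | hpos
          · subst h0; simpa using hSW
          · have h1 : i ≠ 0 := by omega
            simp only [h1, if_false]
            exact hqu (i - 1) (by omega)
end

section
/- Let G be an MPDAG and S, T distinct vertices. The critical set C_{ST} of S with respect to T (neighbors of S on some chordless b-possibly causal path from S to T) equals F_{ST}, the set of neighbors of S lying on at least one b-possibly causal path of definite status from S to T that has no chord with S as an endpoint. -/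
variable {V : Type*}

/-- The critical set `C_{ST}` equals `F_{ST}`, the set of
neighbors of `S` lying on at least one b-possibly causal definite status path
from `S` to `T` with no chord having `S` as an endpoint. -/
theorem stmt11 (dir undir : V → V → Prop)
    (hmpdag : IsMPDAG dir undir)
    (S T : V) (hST : S ≠ T)
    (hfact1 : ∀ (k : ℕ) (p : ℕ → V) (S' T' : V),
      IsPathFrom dir undir k p S' T' → Chordless dir undir k p →
      DefiniteStatus dir undir k p)
    (hfact2 : ∀ (k : ℕ) (p : ℕ → V) (S' T' : V),
      IsPathFrom dir undir k p S' T' → BPossCausal dir k p →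
      ∃ m q, IsPathFrom dir undir m q S' T' ∧ BPossCausal dir m q ∧
        Chordless dir undir m q) :
    CriticalSet dir undir S T =
      {w | Adj dir undir S w ∧ ∃ k p, IsPathFrom dir undir k p S T ∧
        BPossCausal dir k p ∧ DefiniteStatus dir undir k p ∧
        (∀ j, 2 ≤ j → j ≤ k → ¬ Adj dir undir (p 0) (p j)) ∧
        ∃ i, i ≤ k ∧ p i = w} := by
  ext w
  simp only [CriticalSet, Set.mem_setOf_eq]
  constructor
  · rintro ⟨hadj, k, p, hpath, hbpc, hchord, i, hik, hpi⟩
    exact ⟨hadj, k, p, hpath, hbpc, hfact1 k p S T hpath hchord,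
      fun j h2 hjk => hchord 0 j h2 hjk, i, hik, hpi⟩
  · rintro ⟨hadj, k, p, hpath, hbpc, _, hnochord, i, hik, hpi⟩
    classical
    obtain ⟨hp0, hpk, hinj, hadjp⟩ := hpath
    have hSS : ¬ Adj dir undir S S := by
      intro h
      rcases hmpdag.1.2.2.1 S with ⟨h1, h2⟩
      rcases h with h | h | h | h
      exacts [h1 h, h1 h, h2 h, h2 h]
    have hwS : w ≠ S := fun h => hSS (h ▸ hadj)
    have hk1 : 1 ≤ k := by
      rcases Nat.eq_zero_or_pos k with h | h
      · exact absurd (hp0 ▸ hpk ▸ (by rw [h])) hST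
      · exact h
    have hi1 : i = 1 := by
      have h0 : i ≠ 0 := fun h => hwS (by rw [← hpi, h, hp0])
      have h2 : ¬ 2 ≤ i := fun h => (hp0 ▸ hpi ▸ hnochord i h hik) hadj
      omega
    have hex : ∃ m, ∃ q : ℕ → V, IsPathFrom dir undir m q S T ∧
        BPossCausal dir m q ∧
        (∀ j, 2 ≤ j → j ≤ m → ¬ Adj dir undir S (q j)) ∧ q 1 = w ∧ 1 ≤ m :=
      ⟨k, p, ⟨hp0, hpk, hinj, hadjp⟩, hbpc,
        fun j h2 hj => hp0 ▸ hnochord j h2 hj, hi1 ▸ hpi, hk1⟩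
    obtain ⟨q, hqpath, hqbpc, hqnoc, hq1, hm1⟩ := Nat.find_spec hex
    set m := Nat.find hex with hmdef
    obtain ⟨hq0, hqT, hqinj, hqadj⟩ := hqpath
    have hchordless : Chordless dir undir m q := by
      intro a b hab hbm hA
      rcases Nat.eq_zero_or_pos a with ha0 | ha1
      · subst ha0
        rw [hq0] at hA
        exact hqnoc b hab hbm hA
      -- a ≥ 1 : shortcut the chord, contradicting minimality of m
      set d := b - a - 1 with hd
      set m' := m - d with hm'
      have hd1 : 1 ≤ d := by omega
      have hdm : d ≤ m := by omega
      have hma : a + 1 ≤ m' := by omega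
      have hmm : m' < m := by omega
      apply Nat.find_min hex hmm
      set r : ℕ → V := fun t => if t ≤ a then q t else q (t + d) with hr
      refine ⟨r, ⟨?_, ?_, ?_, ?_⟩, ?_, ?_, ?_, by omega⟩
      · simp only [hr]
        rw [if_pos (Nat.zero_le a)]
        exact hq0
      · simp only [hr]
        rw [if_neg (by omega : ¬ m' ≤ a)]
        have e : m' + d = m := by omega
        rw [e]; exact hqT
      · intro t t' ht ht' hqq
        simp only [hr] at hqq
        split_ifs at hqq with h1 h2 h2 <;>
          (have := hqinj _ _ (by omega) (by omega) hqq; omega)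
      · intro t ht
        simp only [hr]
        by_cases h1 : t + 1 ≤ a
        · rw [if_pos (by omega : t ≤ a), if_pos h1]
          exact hqadj t (by omega)
        · by_cases h0 : t ≤ a
          · rw [if_pos h0, if_neg h1]
            have e1 : t = a := by omega
            have e2 : t + 1 + d = b := by omega
            rw [e2, e1]; exact hA
          · rw [if_neg h0, if_neg h1]
            have e : t + 1 + d = t + d + 1 := by omega
            rw [e]; exact hqadj (t + d) (by omega)
      · intro t t' htt ht'
        simp only [hr]
        split_ifs with h1 h2 h2
        · exact hqbpc t t' (by omega) (by omega)
        · exact (h2 (by omega)).elim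
        · exact hqbpc t (t' + d) (by omega) (by omega)
        · exact hqbpc (t + d) (t' + d) (by omega) (by omega)
      · intro j h2 hj
        simp only [hr]
        split_ifs with h1
        · exact hqnoc j h2 (by omega)
        · exact hqnoc (j + d) (by omega) (by omega)
      · simp only [hr]
        rw [if_pos (by omega : 1 ≤ a)]
        exact hq1
    exact ⟨hadj, m, q, ⟨hq0, hqT, hqinj, hqadj⟩, hqbpc, hchordless, 1, hm1, hq1⟩
end

section
/- Let G be an MPDAG and S, T distinct vertices. If p is a b-possibly causal path from S to T in G, then some subsequence of the vertices of p forms a chordless (unshielded) b-possibly causal path from S to T in G. -/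
variable {V : Type*}

/-- Every b-possibly causal path from `S` to `T` in an MPDAG has
a subsequence forming a chordless b-possibly causal path from `S` to `T`. -/
theorem stmt12 (dir undir : V → V → Prop)
    (hmpdag : IsMPDAG dir undir)
    (S T : V) (hST : S ≠ T)
    (k : ℕ) (p : ℕ → V)
    (hpath : IsPathFrom dir undir k p S T)
    (hbpc : BPossCausal dir k p) :
    ∃ (m : ℕ) (f : ℕ → ℕ), f 0 = 0 ∧ f m = k ∧
      (∀ i j, i < j → j ≤ m → f i < f j) ∧
      IsPathFrom dir undir m (fun i => p (f i)) S T ∧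
      BPossCausal dir m (fun i => p (f i)) ∧
      Chordless dir undir m (fun i => p (f i)) := by
  classical
  obtain ⟨hp0, hpk, hinj, hadj⟩ := hpath
  set P : ℕ → Prop := fun m => ∃ f : ℕ → ℕ, f 0 = 0 ∧ f m = k ∧
    (∀ i j, i < j → j ≤ m → f i < f j) ∧
    (∀ i, i < m → Adj dir undir (p (f i)) (p (f (i + 1)))) with hP
  have hex : ∃ m, P m := ⟨k, id, rfl, rfl, fun i j h _ => h, fun i h => hadj i h⟩
  obtain ⟨f, hf0, hfm, hmono, hfadj⟩ := Nat.find_spec hex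
  set m := Nat.find hex with hm
  have hmono' : ∀ i j, i ≤ j → j ≤ m → f i ≤ f j := by
    intro i j hij hjm
    rcases lt_or_eq_of_le hij with h | h
    · exact le_of_lt (hmono i j h hjm)
    · exact le_of_eq (congrArg f h)
  have hfle : ∀ i, i ≤ m → f i ≤ k := fun i hi => hfm ▸ hmono' i m hi le_rfl
  have hchord : Chordless dir undir m (fun i => p (f i)) := by
    intro i j hij hjm hAdj
    set d := j - i - 1 with hd
    have hd1 : 1 ≤ d := by omega
    have hPm' : P (m - d) := by
      refine ⟨fun t => if t ≤ i then f t else f (t + d), by simp [hf0], ?_, ?_, ?_⟩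
      · have h1 : ¬ (m - d ≤ i) := by omega
        simp only [h1, if_false]
        have h2 : m - d + d = m := by omega
        rw [h2, hfm]
      · intro a b hab hbm
        by_cases ha : a ≤ i <;> by_cases hb : b ≤ i <;>
          simp only [ha, hb, if_true, if_false]
        · exact hmono a b hab (by omega)
        · exact hmono a (b + d) (by omega) (by omega)
        · omega
        · exact hmono (a + d) (b + d) (by omega) (by omega)
      · intro t ht
        by_cases h1 : t + 1 ≤ i
        · simp only [show t ≤ i by omega, h1, if_true]
          exact hfadj t (by omega)
        · by_cases h2 : t ≤ i
          · have hti : t = i := by omega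
            simp only [h2, h1, if_true, if_false]
            have h3 : t + 1 + d = j := by omega
            rw [h3, hti]
            exact hAdj
          · simp only [h2, h1, if_false]
            rw [show t + 1 + d = t + d + 1 by omega]
            exact hfadj (t + d) (by omega)
    exact absurd hPm' (Nat.find_min hex (by omega))
  refine ⟨m, f, hf0, hfm, hmono, ⟨by simp only [hf0, hp0], by simp only [hfm, hpk], ?_, hfadj⟩, ?_, hchord⟩
  · intro i j hi hj heq
    have hfe : f i = f j := hinj (f i) (f j) (hfle i hi) (hfle j hj) heq
    rcases lt_trichotomy i j with h | h | h
    · exact absurd hfe (Nat.ne_of_lt (hmono i j h hj))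
    · exact h
    · exact absurd hfe.symm (Nat.ne_of_lt (hmono j i h hi))
  · intro i j hij hjm hdir
    exact hbpc (f i) (f j) (hmono i j hij hjm) (hfle j hjm) hdir
end

section
/- Let D be a DAG in the equivalence class [G] of an MPDAG G, and suppose S is an ancestor of T in D. Let π be a shortest directed path from S to T in D. Then the corresponding path in G is a chordless b-possibly causal path, and the vertex immediately after S on π belongs to the critical set of S with respect to T and is a child of S in D. -/
variable {V : Type*}

/-- Helper: a backward edge over a directed path yields a directed cycle. -/
lemma no_back_aux (dirD : V → V → Prop) (hac : NoDirCycle dirD)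
    (k : ℕ) (p : ℕ → V) (hpath : ∀ i, i < k → dirD (p i) (p (i + 1)))
    (i j : ℕ) (hij : i < j) (hjk : j ≤ k) (hback : dirD (p j) (p i)) : False := by
  apply hac
  refine ⟨j - i + 1, fun m => p (i + m % (j - i + 1)), Nat.succ_pos _, ?_, ?_⟩
  · intro m hm
    rcases eq_or_lt_of_le (Nat.succ_le_of_lt hm) with h | h
    · have h1 : m % (j - i + 1) = m := Nat.mod_eq_of_lt hm
      have h2 : (m + 1) % (j - i + 1) = 0 := by rw [← h]; exact Nat.mod_self _
      have hm' : m = j - i := by omega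
      simp only [h1, h2, Nat.add_zero]
      have h3 : i + m = j := by omega
      rw [h3]; exact hback
    · have h1 : m % (j - i + 1) = m := Nat.mod_eq_of_lt hm
      have h2 : (m + 1) % (j - i + 1) = m + 1 := Nat.mod_eq_of_lt h
      simp only [h1, h2, ← Nat.add_assoc]
      exact hpath (i + m) (by omega)
  · simp

/-- A shortest directed path from `S` to `T` in a DAG `D ∈ [G]`
corresponds in `G` to a chordless b-possibly causal path, and the vertex
immediately after `S` belongs to the critical set of `S` w.r.t. `T` and is a
child of `S` in `D`. -/
theorem stmt14 (dir undir dirD : V → V → Prop)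
    (hmpdag : IsMPDAG dir undir)
    (hext : IsExtension dir undir dirD)
    (S T : V) (k : ℕ) (p : ℕ → V) (hk : 0 < k)
    (hdp : DirPathFrom dirD k p S T)
    (hinj : ∀ i j, i ≤ k → j ≤ k → p i = p j → i = j)
    (hshort : ∀ (m : ℕ) (q : ℕ → V), DirPathFrom dirD m q S T → k ≤ m) :
    IsPathFrom dir undir k p S T ∧
    BPossCausal dir k p ∧ Chordless dir undir k p ∧
    p 1 ∈ CriticalSet dir undir S T ∧ dirD S (p 1) := by
  obtain ⟨hp0, hpk, hedge⟩ := hdp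
  have hac : NoDirCycle dirD := hext.2.2.2.1
  have hAdjG : ∀ a b, dirD a b → Adj dir undir a b := by
    intro a b h
    rcases hext.2.2.1 a b h with h' | h' | h'
    · exact Or.inl h'
    · exact Or.inr (Or.inr (Or.inl h'))
    · exact Or.inr (Or.inr (Or.inr h'))
  have hnoBackD : ∀ i j, i < j → j ≤ k → ¬ dirD (p j) (p i) :=
    fun i j hij hjk h => no_back_aux dirD hac k p hedge i j hij hjk h
  have hbpc : BPossCausal dir k p := by
    intro i j hij hjk h
    exact hnoBackD i j hij hjk (hext.1 _ _ h)
  have hchord : Chordless dir undir k p := by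
    intro i j hij hjk hadj
    have hDij : dirD (p i) (p j) := by
      rcases hadj with h | h | h | h
      · exact hext.1 _ _ h
      · exact absurd (hext.1 _ _ h) (hnoBackD i j (by omega) hjk)
      · rcases hext.2.1 _ _ h with h' | h'
        · exact h'
        · exact absurd h' (hnoBackD i j (by omega) hjk)
      · rcases hext.2.1 _ _ h with h' | h'
        · exact absurd h' (hnoBackD i j (by omega) hjk)
        · exact h'
    set m := k - (j - i) + 1 with hm
    have hq : DirPathFrom dirD m (fun t => if t ≤ i then p t else p (t + (j - i) - 1)) S T := by
      refine ⟨by simp [hp0], ?_, ?_⟩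
      · have h1 : ¬ m ≤ i := by omega
        simp only [h1, if_false]
        have h2 : m + (j - i) - 1 = k := by omega
        rw [h2, hpk]
      · intro t ht
        simp only
        by_cases h1 : t + 1 ≤ i
        · rw [if_pos (by omega : t ≤ i), if_pos h1]
          exact hedge t (by omega)
        · by_cases h2 : t ≤ i
          · have ht' : t = i := by omega
            rw [if_pos h2, if_neg h1]
            have h3 : t + 1 + (j - i) - 1 = j := by omega
            rw [h3, ht']
            exact hDij
          · rw [if_neg h2, if_neg (by omega : ¬ t + 1 ≤ i)]
            have e : t + 1 + (j - i) - 1 = (t + (j - i) - 1) + 1 := by omega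
            rw [e]
            exact hedge (t + (j - i) - 1) (by omega)
    have := hshort m _ hq
    omega
  have hpath : IsPathFrom dir undir k p S T :=
    ⟨hp0, hpk, hinj, fun i hi => hAdjG _ _ (hedge i hi)⟩
  have hS1 : dirD S (p 1) := hp0 ▸ hedge 0 hk
  exact ⟨hpath, hbpc, hchord,
    ⟨hAdjG S (p 1) hS1, k, p, hpath, hbpc, hchord, 1, hk, rfl⟩, hS1⟩
end
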